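/- In the (m,α)-case, the expected jump size from state i equals d_i = n − i for n−m ≤ i ≤ n, and d_i = m − (1−p)(i+m)(1 − ((i+m)/n)^α) for 0 ≤ i < n−m. -/
import Mathlib

open scoped BigOperators

/-- Binomial probability `g_{kj}(p) = C(k,j) p^j (1-p)^{k-j}` for `j ≤ k`, else `0`. -/
noncomputable def g (k j : ℕ) (p : ℝ) : ℝ :=
  if j ≤ k then (k.choose j : ℝ) * p ^ j * (1 - p) ^ (k - j) else 0

/-- `Q_{ij}`: no-division part of the transition probability. -/
noncomputable def Qmat (n : ℕ) (q b : ℕ → ℝ) (i j : ℕ) : ℝ :=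
  if j < n then (if i ≤ j then q (j - i) * (1 - b j) else 0)
  else ∑' t : ℕ, if n ≤ i + t then q t * (1 - b (i + t)) else 0

/-- `R_{ij}(p)`: division part of the transition probability. -/
noncomputable def Rmat (n : ℕ) (q b : ℕ → ℝ) (p : ℝ) (i j : ℕ) : ℝ :=
  if j < n then ∑' t : ℕ, q t * b (i + t) * g (i + t) j p
  else ∑' t : ℕ, if n ≤ i + t then
      q t * b (i + t) * ∑ j' ∈ Finset.Icc n (i + t), g (i + t) j' p
    else 0

/-- Transition probabilities `p_{ij} = Q_{ij} + R_{ij}(p)` for `i < n`, and `p_{nn} = 1`. -/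
noncomputable def pmat (n : ℕ) (q b : ℕ → ℝ) (p : ℝ) (i j : ℕ) : ℝ :=
  if i < n then Qmat n q b i j + Rmat n q b p i j
  else if j = n then 1 else 0

/-- The conditional mean of the next state, `h_i = ∑_{j=1}^n j p_{ij}`. -/
noncomputable def hmean (n : ℕ) (q b : ℕ → ℝ) (p : ℝ) (i : ℕ) : ℝ :=
  ∑ j ∈ Finset.Icc 1 n, (j : ℝ) * pmat n q b p i j

lemma binom_mean (p : ℝ) (k : ℕ) :
    ∑ j ∈ Finset.range (k+1), (j:ℝ) * ((k.choose j : ℝ) * p ^ j * (1-p) ^ (k-j))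
      = k * p := by
  cases k with
  | zero => simp
  | succ k =>
    rw [Finset.sum_range_succ']
    simp only [Nat.cast_zero, zero_mul, add_zero]
    have key : ∀ j ∈ Finset.range (k+1),
        ((j+1 : ℕ):ℝ) * (((k+1).choose (j+1) : ℝ) * p ^ (j+1) * (1-p) ^ (k+1-(j+1)))
        = ((k:ℝ)+1) * p * ((k.choose j : ℝ) * p ^ j * (1-p) ^ (k-j)) := by
      intro j hj
      have hnat : (j+1) * ((k+1).choose (j+1)) = (k+1) * k.choose j := by
        rw [mul_comm, Nat.add_one_mul_choose_eq, mul_comm]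
      have hc : ((j:ℝ)+1) * (((k+1).choose (j+1)) : ℝ) = ((k:ℝ)+1) * (k.choose j : ℝ) := by
        exact_mod_cast hnat
      have hk : k + 1 - (j+1) = k - j := by omega
      rw [hk]
      push_cast
      linear_combination (p^(j+1) * (1-p)^(k-j)) * hc
    rw [Finset.sum_congr rfl key, ← Finset.mul_sum]
    have hbp : ∑ j ∈ Finset.range (k+1), (k.choose j : ℝ) * p ^ j * (1-p) ^ (k-j) = 1 := by
      have h := add_pow p (1-p) k
      simp only [add_sub_cancel, one_pow] at h
      exact (Finset.sum_congr rfl fun j hj => by ring).trans h.symm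
    rw [hbp]
    push_cast
    ring

theorem expected_jump_size_malpha (n m : ℕ) (hn : 1 ≤ n) (hm1 : 1 ≤ m) (hmn : m < n)
    (p α : ℝ) (hp : p ∈ Set.Icc (0 : ℝ) 1) (hα : 1 ≤ α)
    (q b : ℕ → ℝ)
    (hq : q = fun k => if k = m then (1 : ℝ) else 0)
    (hb : b = fun k => if k ≤ n then 1 - ((k : ℝ) / n) ^ α else 0)
    (d : ℕ → ℝ) (hd : d = fun i => hmean n q b p i - i) :
    (∀ i, n - m ≤ i → i ≤ n → d i = (n : ℝ) - i) ∧
    (∀ i, i < n - m →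
      d i = (m : ℝ) - (1 - p) * ((i : ℝ) + m) * (1 - (((i : ℝ) + m) / n) ^ α)) := by
  have hn0 : (n:ℝ) ≠ 0 := Nat.cast_ne_zero.mpr (by omega)
  have hqm : q m = 1 := by rw [hq]; simp
  have hqo : ∀ t, t ≠ m → q t = 0 := by intro t ht; rw [hq]; simp [ht]
  have hbv : ∀ k, k ≤ n → b k = 1 - ((k : ℝ) / n) ^ α := by
    intro k hk; rw [hb]; simp [hk]
  have hbo : ∀ k, n < k → b k = 0 := by
    intro k hk; rw [hb]; simp [Nat.not_le.mpr hk]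
  constructor
  · -- n - m ≤ i ≤ n
    intro i h1 h2
    have hnim : n ≤ i + m := by omega
    have hb0 : b (i + m) = 0 := by
      rcases le_or_gt (i + m) n with h | h
      · have hin : i + m = n := by omega
        rw [hin, hbv n le_rfl, div_self hn0, Real.one_rpow]; ring
      · exact hbo _ h
    have hmean_eq : hmean n q b p i = n := by
      rcases lt_or_eq_of_le h2 with hi | hie
      · -- i < n
        have hpm : ∀ j ∈ Finset.Icc 1 n, pmat n q b p i j = if j = n then 1 else 0 := by
          intro j hj
          simp only [Finset.mem_Icc] at hj
          rw [pmat, if_pos hi]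
          rcases lt_or_eq_of_le hj.2 with hjn | hje
          · rw [if_neg (by omega : ¬ j = n)]
            have hQ : Qmat n q b i j = 0 := by
              rw [Qmat, if_pos hjn]
              split_ifs with h1'
              · rw [hqo (j - i) (by omega), zero_mul]
              · rfl
            have hR : Rmat n q b p i j = 0 := by
              rw [Rmat, if_pos hjn,
                tsum_eq_single m (fun t ht => by rw [hqo t ht]; ring)]
              rw [hqm, hb0]; ring
            rw [hQ, hR, add_zero]
          · rw [hje, if_pos rfl]
            have hQ : Qmat n q b i n = 1 := by
              rw [Qmat, if_neg (lt_irrefl n),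
                tsum_eq_single m (fun t ht => by rw [hqo t ht]; simp)]
              rw [if_pos hnim, hqm, hb0]; ring
            have hR : Rmat n q b p i n = 0 := by
              rw [Rmat, if_neg (lt_irrefl n),
                tsum_eq_single m (fun t ht => by rw [hqo t ht]; simp)]
              rw [if_pos hnim, hb0]; ring
            rw [hQ, hR, add_zero]
        rw [hmean, Finset.sum_congr rfl (fun j hj => by rw [hpm j hj])]
        simp only [mul_ite, mul_one, mul_zero]
        rw [Finset.sum_ite_eq' (Finset.Icc 1 n) n (fun j => (j:ℝ))]
        simp [hn]
      · -- i = n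
        rw [hie, hmean]
        simp only [pmat, lt_irrefl, if_false, mul_ite, mul_one, mul_zero]
        rw [Finset.sum_ite_eq' (Finset.Icc 1 n) n (fun j => (j:ℝ))]
        simp [hn]
    rw [hd]
    simp only [hmean_eq]
  · -- i < n - m
    intro i hi
    have him : i + m < n := by omega
    have hin : i < n := by omega
    have hbB : b (i + m) = 1 - (((i:ℝ) + m) / n) ^ α := by
      rw [hbv _ (by omega)]; push_cast; ring_nf
    set B : ℝ := 1 - (((i:ℝ) + m) / n) ^ α with hB
    have hpm : ∀ j ∈ Finset.Icc 1 n,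
        pmat n q b p i j = (if j = i + m then 1 - B else 0) + B * g (i + m) j p := by
      intro j hj
      simp only [Finset.mem_Icc] at hj
      rw [pmat, if_pos hin]
      rcases lt_or_eq_of_le hj.2 with hjn | hje
      · have hQ : Qmat n q b i j = if j = i + m then 1 - B else 0 := by
          rw [Qmat, if_pos hjn]
          by_cases hij : j = i + m
          · rw [if_pos hij, if_pos (by omega : i ≤ j)]
            have hji : j - i = m := by omega
            rw [hji, hqm, one_mul, hij, hbB]
          · rw [if_neg hij]
            split_ifs with h1'
            · rw [hqo (j - i) (by omega), zero_mul]
            · rfl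
        have hR : Rmat n q b p i j = B * g (i + m) j p := by
          rw [Rmat, if_pos hjn,
            tsum_eq_single m (fun t ht => by rw [hqo t ht]; ring)]
          rw [hqm, hbB, one_mul]
        rw [hQ, hR]
      · rw [hje]
        have hQ : Qmat n q b i n = 0 := by
          rw [Qmat, if_neg (lt_irrefl n),
            tsum_eq_single m (fun t ht => by rw [hqo t ht]; simp)]
          rw [if_neg (by omega : ¬ n ≤ i + m)]
        have hR : Rmat n q b p i n = 0 := by
          rw [Rmat, if_neg (lt_irrefl n),
            tsum_eq_single m (fun t ht => by rw [hqo t ht]; simp)]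
          rw [if_neg (by omega : ¬ n ≤ i + m)]
        have hg : g (i + m) n p = 0 := by
          rw [g, if_neg (by omega : ¬ n ≤ i + m)]
        rw [hQ, hR, hg, if_neg (by omega : ¬ n = i + m), mul_zero, add_zero]
    have hgsum : ∑ j ∈ Finset.Icc 1 n, (j:ℝ) * g (i + m) j p = ((i:ℝ) + m) * p := by
      have e1 : ∑ j ∈ Finset.Icc 1 n, (j:ℝ) * g (i + m) j p
          = ∑ j ∈ Finset.range (n+1), (j:ℝ) * g (i + m) j p := by
        refine Finset.sum_subset ?_ ?_
        · intro x hx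
          simp only [Finset.mem_Icc] at hx
          simp only [Finset.mem_range]; omega
        · intro x hx hx'
          simp only [Finset.mem_range] at hx
          simp only [Finset.mem_Icc] at hx'
          have : x = 0 := by omega
          simp [this]
      have e2 : ∑ j ∈ Finset.range (n+1), (j:ℝ) * g (i + m) j p
          = ∑ j ∈ Finset.range (i+m+1), (j:ℝ) * g (i + m) j p := by
        refine (Finset.sum_subset ?_ ?_).symm
        · intro x hx
          simp only [Finset.mem_range] at hx ⊢; omega
        · intro x hx hx'
          simp only [Finset.mem_range] at hx hx'
          have : ¬ x ≤ i + m := by omega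
          rw [g, if_neg this, mul_zero]
      have e3 : ∑ j ∈ Finset.range (i+m+1), (j:ℝ) * g (i + m) j p
          = ((i+m : ℕ):ℝ) * p := by
        rw [← binom_mean p (i+m)]
        refine Finset.sum_congr rfl fun j hj => ?_
        simp only [Finset.mem_range] at hj
        rw [g, if_pos (by omega : j ≤ i + m)]
      rw [e1, e2, e3]; push_cast; ring
    have hmean_eq : hmean n q b p i = ((i:ℝ) + m) * (1 - B) + B * (((i:ℝ) + m) * p) := by
      rw [hmean, Finset.sum_congr rfl (fun j hj => by rw [hpm j hj])]
      simp only [mul_add, Finset.sum_add_distrib, mul_ite, mul_zero]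
      rw [Finset.sum_ite_eq' (Finset.Icc 1 n) (i+m) (fun j => (j:ℝ) * (1 - B))]
      rw [if_pos (by simp only [Finset.mem_Icc]; omega)]
      have : ∑ j ∈ Finset.Icc 1 n, (j:ℝ) * (B * g (i + m) j p)
          = B * ∑ j ∈ Finset.Icc 1 n, (j:ℝ) * g (i + m) j p := by
        rw [Finset.mul_sum]
        exact Finset.sum_congr rfl fun j hj => by ring
      rw [this, hgsum]
      push_cast; ring
    rw [hd]
    simp only [hmean_eq]
    rw [hB]
    ring
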